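/- arXiv:2510.14236 — 3 statements merged into one kernel-verified Lean document; each statement's English description precedes it below -/
import Mathlib

section
/- Under the hypotheses of the nested convex minimization proposition, the limit u_∞ of the minimum-norm elements u_n of the nested closed convex sets V_n is itself the unique minimum-norm element of the intersection ⋂_n V_n. -/
open Filter Topology

theorem mem_iInter_of_tendsto_of_antitone {ι X : Type*} [SemilatticeSup ι] [Nonempty ι]
    [TopologicalSpace X] {V : ι → Set X} (hV : Antitone V) (hclosed : ∀ i, IsClosed (V i))
    {u : ι → X} (hu : ∀ i, u i ∈ V i) {x : X} (hx : Tendsto u atTop (𝓝 x)) :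
    x ∈ ⋂ i, V i :=
  Set.mem_iInter.2 fun i => (hclosed i).mem_of_tendsto hx <|
    (eventually_ge_atTop i).mono fun _ hj => hV hj (hu _)

/-- Strict convexity makes the midpoint of two distinct points of equal norm strictly shorter. -/
theorem Convex.eq_of_forall_norm_le {E : Type*} [NormedAddCommGroup E] [NormedSpace ℝ E]
    [StrictConvexSpace ℝ E] {K : Set E} (hK : Convex ℝ K) {x y : E} (hx : x ∈ K) (hy : y ∈ K)
    (hxmin : ∀ v ∈ K, ‖x‖ ≤ ‖v‖) (hymin : ∀ v ∈ K, ‖y‖ ≤ ‖v‖) : x = y := by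
  by_contra hne
  have hnorm : ‖x‖ = ‖y‖ := le_antisymm (hxmin y hy) (hymin x hx)
  have hmid : (1 / 2 : ℝ) • (x + y) ∈ K := by
    rw [smul_add]
    exact hK hx hy (by norm_num) (by norm_num) (by norm_num)
  exact (hxmin _ hmid).not_gt ((norm_midpoint_lt_iff hnorm).2 hne)

theorem nested_convex_minNorm_limit_is_minNorm_of_inter_general
    {H : Type*} [NormedAddCommGroup H] [InnerProductSpace ℝ H]
    (V : ℕ → Set H)
    (hclosed : ∀ n, IsClosed (V n))
    (hconv : ∀ n, Convex ℝ (V n))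
    (hnested : ∀ n, V (n + 1) ⊆ V n)
    (u : ℕ → H)
    (hmem : ∀ n, u n ∈ V n)
    (hmin : ∀ n, ∀ v ∈ V n, ‖u n‖ ≤ ‖v‖)
    (uLim : H)
    (hlim : Filter.Tendsto u Filter.atTop (nhds uLim)) :
    uLim ∈ ⋂ n, V n ∧ (∀ v ∈ ⋂ n, V n, ‖uLim‖ ≤ ‖v‖) ∧
      (∀ w ∈ ⋂ n, V n, (∀ v ∈ ⋂ n, V n, ‖w‖ ≤ ‖v‖) → w = uLim) := by
  have hlimMem : uLim ∈ ⋂ n, V n :=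
    mem_iInter_of_tendsto_of_antitone (antitone_nat_of_succ_le hnested) hclosed hmem hlim
  have hlimMin : ∀ v ∈ ⋂ n, V n, ‖uLim‖ ≤ ‖v‖ := fun v hv =>
    le_of_tendsto' hlim.norm fun n => hmin n v (Set.mem_iInter.1 hv n)
  have hconvInter : Convex ℝ (⋂ n, V n) := convex_iInter hconv
  exact ⟨hlimMem, hlimMin, fun w hw hwmin =>
    hconvInter.eq_of_forall_norm_le hw hlimMem hwmin hlimMin⟩

/-- The limit of the minimum-norm elements of nested closed convex sets is the
unique minimum-norm element of the intersection. -/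
theorem nested_convex_minNorm_limit_is_minNorm_of_inter
    {H : Type*} [NormedAddCommGroup H] [InnerProductSpace ℝ H] [CompleteSpace H]
    (V : ℕ → Set H)
    (hne : ∀ n, (V n).Nonempty)
    (hclosed : ∀ n, IsClosed (V n))
    (hconv : ∀ n, Convex ℝ (V n))
    (hnested : ∀ n, V (n + 1) ⊆ V n)
    (u : ℕ → H)
    (hmem : ∀ n, u n ∈ V n)
    (hmin : ∀ n, ∀ v ∈ V n, ‖u n‖ ≤ ‖v‖)
    (B : ℝ) (hB : ∀ n, ‖u n‖ ≤ B)
    (uLim : H)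
    (hlim : Filter.Tendsto u Filter.atTop (nhds uLim)) :
    uLim ∈ ⋂ n, V n ∧ (∀ v ∈ ⋂ n, V n, ‖uLim‖ ≤ ‖v‖) ∧
      (∀ w ∈ ⋂ n, V n, (∀ v ∈ ⋂ n, V n, ‖w‖ ≤ ‖v‖) → w = uLim) :=
  nested_convex_minNorm_limit_is_minNorm_of_inter_general V hclosed hconv hnested u hmem hmin uLim
    hlim
end

section
/- Let V₁ ⊇ V₂ be nonempty closed convex subsets of a Hilbert space H with minimum-norm elements u₁, u₂, and suppose ‖u₁‖ ≤ B and ‖u₂‖ ≤ B. Then ‖u₂ − u₁‖² ≤ 2B(‖u₂‖ − ‖u₁‖). -/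
/-!
Since `u₁` minimises the norm on the convex set `V₁ ∋ u₂`, the variational inequality gives
`⟪u₁, u₂ - u₁⟫ ≥ 0`, hence `‖u₂ - u₁‖² ≤ ‖u₂‖² - ‖u₁‖² = (‖u₂‖ + ‖u₁‖)(‖u₂‖ - ‖u₁‖)`, and
`‖u₁‖ ≤ ‖u₂‖` bounds the last product by `2B(‖u₂‖ - ‖u₁‖)`.
-/

open scoped RealInnerProductSpace

/-- Unlike `InnerProductSpace.rclikeToReal`, this keeps the given real scalar action, so that
`Convex ℝ` refers to the same structure before and after. -/
abbrev InnerProductSpace.rclikeToRealOfIsScalarTower (𝕜 H : Type*) [RCLike 𝕜]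
    [NormedAddCommGroup H] [InnerProductSpace 𝕜 H] [NormedSpace ℝ H] [IsScalarTower ℝ 𝕜 H] :
    InnerProductSpace ℝ H where
  toInner := Inner.rclikeToReal 𝕜 H
  norm_sq_eq_re_inner x := norm_sq_eq_re_inner (𝕜 := 𝕜) x
  conj_inner_symm x y := inner_re_symm (𝕜 := 𝕜) y x
  add_left x y z := by
    change RCLike.re (inner 𝕜 (x + y) z) = RCLike.re (inner 𝕜 x z) + RCLike.re (inner 𝕜 y z)
    rw [inner_add_left, map_add]
  smul_left x y r := by
    change RCLike.re (inner 𝕜 (r • x) y) = r * RCLike.re (inner 𝕜 x y)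
    rw [← algebraMap_smul 𝕜 r x, RCLike.algebraMap_eq_ofReal, inner_smul_left,
      RCLike.conj_ofReal, RCLike.re_ofReal_mul]

section MinNorm

variable {F : Type*} [NormedAddCommGroup F] [InnerProductSpace ℝ F] {K : Set F} {u v : F}

theorem real_inner_sub_nonneg_of_forall_norm_le (hK : Convex ℝ K) (hu : u ∈ K)
    (hmin : ∀ w ∈ K, ‖u‖ ≤ ‖w‖) (hv : v ∈ K) : 0 ≤ ⟪u, v - u⟫ := by
  have hinf : ‖0 - u‖ = ⨅ w : K, ‖0 - (w : F)‖ := by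
    have : Nonempty K := ⟨⟨u, hu⟩⟩
    have hbdd : BddBelow (Set.range fun w : K => ‖0 - (w : F)‖) :=
      ⟨0, by rintro _ ⟨w, rfl⟩; exact norm_nonneg _⟩
    exact le_antisymm (le_ciInf fun w => by simpa using hmin w w.2) (ciInf_le hbdd ⟨u, hu⟩)
  have h := (norm_eq_iInf_iff_real_inner_le_zero hK hu).mp hinf v hv
  rwa [zero_sub, inner_neg_left, neg_nonpos] at h

theorem norm_sub_sq_le_of_forall_norm_le (hK : Convex ℝ K) (hu : u ∈ K)
    (hmin : ∀ w ∈ K, ‖u‖ ≤ ‖w‖) (hv : v ∈ K) : ‖v - u‖ ^ 2 ≤ ‖v‖ ^ 2 - ‖u‖ ^ 2 := by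
  have hinner := real_inner_sub_nonneg_of_forall_norm_le hK hu hmin hv
  have hexpand : ‖v‖ ^ 2 = ‖u‖ ^ 2 + 2 * ⟪u, v - u⟫ + ‖v - u‖ ^ 2 := by
    simpa using norm_add_sq_real u (v - u)
  linarith

end MinNorm

theorem minNorm_diff_sq_le_two_B_general
    {𝕜 H : Type*} [RCLike 𝕜] [NormedAddCommGroup H] [InnerProductSpace 𝕜 H]
    [NormedSpace ℝ H] [IsScalarTower ℝ 𝕜 H]
    (V₁ V₂ : Set H)
    (hsub : V₂ ⊆ V₁)
    (hconv₁ : Convex ℝ V₁)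
    (u₁ u₂ : H)
    (hmem₁ : u₁ ∈ V₁) (hmin₁ : ∀ v ∈ V₁, ‖u₁‖ ≤ ‖v‖)
    (hmem₂ : u₂ ∈ V₂)
    (B : ℝ) (hB₁ : ‖u₁‖ ≤ B) (hB₂ : ‖u₂‖ ≤ B) :
    ‖u₂ - u₁‖ ^ 2 ≤ 2 * B * (‖u₂‖ - ‖u₁‖) := by
  let := InnerProductSpace.rclikeToRealOfIsScalarTower 𝕜 H
  have hu₂ : u₂ ∈ V₁ := hsub hmem₂
  have hmono : ‖u₁‖ ≤ ‖u₂‖ := hmin₁ u₂ hu₂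
  calc ‖u₂ - u₁‖ ^ 2 ≤ ‖u₂‖ ^ 2 - ‖u₁‖ ^ 2 :=
        norm_sub_sq_le_of_forall_norm_le hconv₁ hmem₁ hmin₁ hu₂
    _ = (‖u₂‖ + ‖u₁‖) * (‖u₂‖ - ‖u₁‖) := by ring
    _ ≤ 2 * B * (‖u₂‖ - ‖u₁‖) := by gcongr; linarith

/-- For minimum-norm elements u₁, u₂ of nested closed convex sets V₂ ⊆ V₁ in a
Hilbert space, with both norms bounded by B: ‖u₂ - u₁‖² ≤ 2B(‖u₂‖ - ‖u₁‖). -/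
theorem minNorm_diff_sq_le_two_B
    {𝕜 H : Type*} [RCLike 𝕜] [NormedAddCommGroup H] [InnerProductSpace 𝕜 H]
    [NormedSpace ℝ H] [IsScalarTower ℝ 𝕜 H]
    (V₁ V₂ : Set H)
    (hsub : V₂ ⊆ V₁)
    (hne₁ : V₁.Nonempty) (hne₂ : V₂.Nonempty)
    (hclosed₁ : IsClosed V₁) (hclosed₂ : IsClosed V₂)
    (hconv₁ : Convex ℝ V₁) (hconv₂ : Convex ℝ V₂)
    (u₁ u₂ : H)
    (hmem₁ : u₁ ∈ V₁) (hmin₁ : ∀ v ∈ V₁, ‖u₁‖ ≤ ‖v‖)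
    (hmem₂ : u₂ ∈ V₂) (hmin₂ : ∀ v ∈ V₂, ‖u₂‖ ≤ ‖v‖)
    (B : ℝ) (hB₁ : ‖u₁‖ ≤ B) (hB₂ : ‖u₂‖ ≤ B) :
    ‖u₂ - u₁‖ ^ 2 ≤ 2 * B * (‖u₂‖ - ‖u₁‖) :=
  minNorm_diff_sq_le_two_B_general (𝕜 := 𝕜) V₁ V₂ hsub hconv₁ u₁ u₂ hmem₁ hmin₁ hmem₂ B hB₁ hB₂
end

section
/- For x₀ ∈ ℝ² with ‖x₀‖ ≤ 1, −(1/2π) ∫_{D} ln ‖x − x₀‖ dx = 1/4 − ‖x₀‖²/4, where D is the closed unit disk; and for ‖x₀‖ > 1, −(1/2π) ∫_{D} ln ‖x − x₀‖ dx = −(1/2) ln ‖x₀‖. -/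
/-!
In polar coordinates the integral of `log ‖z - a‖` over the unit disk becomes
`∫₀¹ 2π r · A(r) dr`, where `A(r)` is the average of `log ‖· - a‖` over the circle of
radius `r`. By the mean value property of the harmonic function `log ‖z - a‖` (Jensen's
formula when `a` lies inside the circle), `A(r) = log (max r ‖a‖)`, and the remaining radial
integral is elementary. The singularity is integrable because `|log ‖x‖| ≤ 2 ‖x‖^(-1/2)` near
`0`, in every dimension `≥ 1`.
-/

open MeasureTheory Real Set Metric

theorem abs_log_le_two_mul_rpow_neg_half {t : ℝ} (ht₀ : 0 ≤ t) (ht₁ : t ≤ 1) :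
    |log t| ≤ 2 * t ^ (-(1 / 2) : ℝ) := by
  rcases ht₀.eq_or_lt with rfl | ht₀
  · simp
  calc |log t| = log t⁻¹ := by rw [abs_of_nonpos (log_nonpos ht₀.le ht₁), log_inv]
    _ ≤ t⁻¹ ^ (1 / 2 : ℝ) / (1 / 2) := log_le_rpow_div (by positivity) (by norm_num)
    _ = 2 * t ^ (-(1 / 2) : ℝ) := by rw [inv_rpow ht₀.le, rpow_neg ht₀.le]; ring

section LogNorm

variable {E : Type*} [NormedAddCommGroup E] [NormedSpace ℝ E] [FiniteDimensional ℝ E]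
  [MeasurableSpace E] [BorelSpace E] {μ : Measure E} [μ.IsAddHaarMeasure]

theorem integrableOn_ball_zero_one_log_norm [Nontrivial E] :
    IntegrableOn (fun x : E ↦ log ‖x‖) (ball 0 1) μ := by
  have hd : 1 ≤ Module.finrank ℝ E := Module.finrank_pos
  refine integrableOn_ball_of_norm_le_rpow hd (C := 2) (α := 1 / 2)
    (lt_of_lt_of_le (by norm_num) (Nat.one_le_cast.2 hd)) ?_
    (continuous_norm.measurable.log).aestronglyMeasurable
  filter_upwards [self_mem_ae_restrict measurableSet_ball] with x hx
  exact abs_log_le_two_mul_rpow_neg_half (norm_nonneg x) (mem_ball_zero_iff.1 hx).le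

theorem locallyIntegrable_log_norm_sub [Nontrivial E] (a : E) :
    LocallyIntegrable (fun x : E ↦ log ‖x - a‖) μ := by
  intro x
  rcases eq_or_ne x a with rfl | hxa
  · refine ⟨ball x 1, ball_mem_nhds x one_pos, ?_⟩
    have hpre : (· - x) ⁻¹' ball (0 : E) 1 = ball x 1 := by
      ext y; simp [dist_eq_norm]
    rw [← hpre]
    exact ((measurePreserving_sub_right μ x).integrableOn_comp_preimage
      (measurableEmbedding_subRight x)).2 integrableOn_ball_zero_one_log_norm
  · have hcont : ContinuousOn (fun y : E ↦ log ‖y - a‖) {a}ᶜ := fun y hy ↦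
      ((continuous_id.sub continuous_const).norm.continuousAt.log
        (norm_ne_zero_iff.2 (sub_ne_zero.2 hy))).continuousWithinAt
    simpa [isOpen_compl_singleton.nhdsWithin_eq hxa] using
      hcont.integrableAt_nhdsWithin isOpen_compl_singleton.measurableSet hxa

end LogNorm

section PolarCoord

variable {E : Type*} [NormedAddCommGroup E] [NormedSpace ℝ E]

theorem integrableOn_polarCoord_target_iff {f : ℝ × ℝ → E} :
    IntegrableOn (fun p ↦ p.1 • f (polarCoord.symm p)) polarCoord.target ↔ Integrable f := by
  rw [← integrableOn_univ, ← integrableOn_congr_set_ae polarCoord_source_ae_eq_univ,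
    ← polarCoord.symm_image_target_eq_source,
    integrableOn_image_iff_integrableOn_abs_det_fderiv_smul volume
      polarCoord.open_target.measurableSet
      (fun p _ ↦ (hasFDerivAt_polarCoord_symm p).hasFDerivWithinAt) polarCoord.symm.injOn]
  simp_rw [det_fderivPolarCoordSymm]
  refine integrableOn_congr_fun (fun p hp ↦ ?_) polarCoord.open_target.measurableSet
  rw [abs_of_pos hp.1]

theorem Complex.integrableOn_polarCoord_target_iff {f : ℂ → E} :
    IntegrableOn (fun p ↦ p.1 • f (Complex.polarCoord.symm p)) polarCoord.target ↔
      Integrable f := by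
  rw [← (Complex.volume_preserving_equiv_real_prod.symm).integrable_comp_emb
    Complex.measurableEquivRealProd.symm.measurableEmbedding,
    ← _root_.integrableOn_polarCoord_target_iff]
  rfl

theorem Complex.polarCoord_symm_eq_circleMap (p : ℝ × ℝ) :
    Complex.polarCoord.symm p = circleMap 0 p.1 p.2 := by
  simp [circleMap, Complex.exp_mul_I, ← Complex.ofReal_cos, ← Complex.ofReal_sin]

theorem circleAverage_eq_setIntegral_Ioo (f : ℂ → E) (c : ℂ) (R : ℝ) :
    circleAverage f c R = (2 * π)⁻¹ • ∫ θ in Ioo (-π) π, f (circleMap c R θ) := by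
  rw [circleAverage_eq_integral_add (-π),
    intervalIntegral.integral_comp_add_right (fun θ ↦ f (circleMap c R θ)),
    zero_add, show 2 * π + -π = π by ring,
    intervalIntegral.integral_of_le (by linarith [pi_pos]),
    integral_Ioc_eq_integral_Ioo]

theorem setIntegral_closedBall_eq_setIntegral_circleAverage {f : ℂ → E} {R : ℝ}
    (hf : IntegrableOn f (closedBall 0 R)) :
    ∫ z in closedBall 0 R, f z = ∫ r in Ioc 0 R, (2 * π * r) • circleAverage f 0 r := by
  set g := (closedBall (0 : ℂ) R).indicator f
  have hg : Integrable g := (integrable_indicator_iff measurableSet_closedBall).2 hf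
  have hinner : ∀ r ∈ Ioi (0 : ℝ),
      ∫ θ in Ioo (-π) π, r • g (Complex.polarCoord.symm (r, θ)) =
        (Iic R).indicator (fun r ↦ (2 * π * r) • circleAverage f 0 r) r := by
    intro r hr
    simp_rw [Complex.polarCoord_symm_eq_circleMap]
    by_cases hrR : r ≤ R
    · have : ∀ θ, g (circleMap 0 r θ) = f (circleMap 0 r θ) := fun θ ↦
        indicator_of_mem (by simpa [abs_of_pos hr.out] using hrR) f
      simp_rw [this, indicator_of_mem (mem_Iic.2 hrR), integral_smul,
        circleAverage_eq_setIntegral_Ioo, smul_smul]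
      rw [mul_right_comm, mul_inv_cancel₀ (by positivity), one_mul]
    · have : ∀ θ, g (circleMap 0 r θ) = 0 := fun θ ↦
        indicator_of_notMem (by simpa [abs_of_pos hr.out] using hrR) f
      simp [this, hrR]
  calc ∫ z in closedBall 0 R, f z
      = ∫ p in Ioi 0 ×ˢ Ioo (-π) π, p.1 • g (Complex.polarCoord.symm p) := by
        rw [← integral_indicator measurableSet_closedBall,
          ← Complex.integral_comp_polarCoord_symm]; rfl
    _ = ∫ r in Ioi 0, ∫ θ in Ioo (-π) π, r • g (Complex.polarCoord.symm (r, θ)) := by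
        rw [Measure.volume_eq_prod]
        exact setIntegral_prod _ (Complex.integrableOn_polarCoord_target_iff.2 hg)
    _ = ∫ r in Ioc 0 R, (2 * π * r) • circleAverage f 0 r := by
        rw [setIntegral_congr_fun measurableSet_Ioi hinner,
          integral_indicator measurableSet_Iic, Measure.restrict_restrict measurableSet_Iic,
          Iic_inter_Ioi]

end PolarCoord

theorem circleAverage_log_norm_sub_const_eq_log_max {r : ℝ} (hr : 0 < r) (a : ℂ) :
    circleAverage (log ‖· - a‖) 0 r = log (max r ‖a‖) := by
  rw [circleAverage_log_norm_sub_const_eq_log_radius_add_posLog hr.ne', zero_sub, norm_neg,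
    posLog_eq_log_max_one (by positivity), ← log_mul hr.ne' (by positivity),
    mul_max_of_nonneg _ _ hr.le, mul_one, mul_inv_cancel_left₀ hr.ne']

theorem integral_mul_log {a b : ℝ} (ha : 0 ≤ a) (hb : 0 ≤ b) :
    ∫ x in a..b, x * log x = b ^ 2 / 2 * log b - b ^ 2 / 4 - (a ^ 2 / 2 * log a - a ^ 2 / 4) := by
  have hcont : Continuous fun x : ℝ ↦ x ^ 2 / 2 * log x - x ^ 2 / 4 := by
    refine ((continuous_id.mul continuous_mul_log).div_const 2 |>.sub
      ((continuous_pow 2).div_const 4)).congr fun x ↦ ?_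
    simp only [Pi.sub_apply, Pi.mul_apply, id]
    ring
  refine intervalIntegral.integral_eq_sub_of_hasDeriv_right hcont.continuousOn (fun x hx ↦ ?_)
    (continuous_mul_log.intervalIntegrable _ _)
  have hx : x ≠ 0 := (lt_of_le_of_lt (le_min ha hb) hx.1).ne'
  refine HasDerivAt.hasDerivWithinAt <| ((((hasDerivAt_pow 2 x).div_const 2).mul
    (hasDerivAt_log hx)).sub ((hasDerivAt_pow 2 x).div_const 4)).congr_deriv ?_
  field_simp
  ring

theorem integral_mul_log_max_of_le_one {m : ℝ} (hm₀ : 0 ≤ m) (hm₁ : m ≤ 1) :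
    ∫ r in (0 : ℝ)..1, r * log (max r m) = (m ^ 2 - 1) / 4 := by
  have h₁ : EqOn (fun r ↦ r * log (max r m)) (fun r ↦ r * log m) (uIcc 0 m) := fun r hr ↦ by
    rw [uIcc_of_le hm₀] at hr; simp only [max_eq_right hr.2]
  have h₂ : EqOn (fun r ↦ r * log (max r m)) (fun r ↦ r * log r) (uIcc m 1) := fun r hr ↦ by
    rw [uIcc_of_le hm₁] at hr; simp only [max_eq_left hr.1]
  rw [← intervalIntegral.integral_add_adjacent_intervals (b := m)
      ((continuous_id.mul continuous_const).continuousOn.congr h₁).intervalIntegrable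
      (continuous_mul_log.continuousOn.congr h₂).intervalIntegrable,
    intervalIntegral.integral_congr h₁, intervalIntegral.integral_congr h₂,
    intervalIntegral.integral_mul_const, integral_id, integral_mul_log hm₀ zero_le_one, log_one]
  ring

theorem integral_mul_log_max_of_one_le {m : ℝ} (hm : 1 ≤ m) :
    ∫ r in (0 : ℝ)..1, r * log (max r m) = log m / 2 := by
  rw [intervalIntegral.integral_congr (g := fun r ↦ r * log m) fun r hr ↦ by
    rw [uIcc_of_le zero_le_one] at hr; rw [max_eq_right (hr.2.trans hm)],
    intervalIntegral.integral_mul_const, integral_id]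
  ring

theorem setIntegral_closedBall_log_norm_sub {R : ℝ} (hR : 0 ≤ R) (a : ℂ) :
    ∫ z in closedBall (0 : ℂ) R, log ‖z - a‖ =
      2 * π * ∫ r in (0 : ℝ)..R, r * log (max r ‖a‖) := by
  rw [setIntegral_closedBall_eq_setIntegral_circleAverage
      ((locallyIntegrable_log_norm_sub a).integrableOn_isCompact (isCompact_closedBall 0 R)),
    intervalIntegral.integral_of_le hR, ← integral_const_mul]
  refine setIntegral_congr_fun measurableSet_Ioc fun r hr ↦ ?_
  rw [circleAverage_log_norm_sub_const_eq_log_max hr.1, smul_eq_mul, mul_assoc]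

theorem LinearIsometryEquiv.setIntegral_closedBall_comp {E F G : Type*}
    [NormedAddCommGroup E] [InnerProductSpace ℝ E] [FiniteDimensional ℝ E]
    [MeasurableSpace E] [BorelSpace E]
    [NormedAddCommGroup F] [InnerProductSpace ℝ F] [FiniteDimensional ℝ F]
    [MeasurableSpace F] [BorelSpace F] [NormedAddCommGroup G] [NormedSpace ℝ G]
    (e : E ≃ₗᵢ[ℝ] F) (f : F → G) (x : F) (r : ℝ) :
    ∫ y in closedBall (e.symm x) r, f (e y) = ∫ y in closedBall x r, f y := by
  rw [← e.preimage_closedBall, e.measurePreserving.setIntegral_preimage_emb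
    e.toHomeomorph.measurableEmbedding]

/-- Potential of the uniformly charged unit disk:
−(1/2π)∫_D ln‖x − x₀‖ dx = 1/4 − ‖x₀‖²/4 for ‖x₀‖ ≤ 1, and −(1/2)ln‖x₀‖ for
‖x₀‖ > 1. -/
theorem disk_log_potential (x₀ : EuclideanSpace ℝ (Fin 2)) :
    (‖x₀‖ ≤ 1 →
      -(1 / (2 * π)) * ∫ x in Metric.closedBall (0 : EuclideanSpace ℝ (Fin 2)) 1,
          Real.log ‖x - x₀‖ = 1 / 4 - ‖x₀‖ ^ 2 / 4) ∧
    (1 < ‖x₀‖ →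
      -(1 / (2 * π)) * ∫ x in Metric.closedBall (0 : EuclideanSpace ℝ (Fin 2)) 1,
          Real.log ‖x - x₀‖ = -(1 / 2) * Real.log ‖x₀‖) := by
  set e := Complex.orthonormalBasisOneI.repr
  have hint : ∫ x in closedBall (0 : EuclideanSpace ℝ (Fin 2)) 1, log ‖x - x₀‖ =
      2 * π * ∫ r in (0 : ℝ)..1, r * log (max r ‖x₀‖) := by
    have hsub : ∀ z, e z - x₀ = e (z - e.symm x₀) := fun z ↦ by simp
    rw [← e.setIntegral_closedBall_comp, map_zero]
    simp_rw [hsub, LinearIsometryEquiv.norm_map]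
    rw [setIntegral_closedBall_log_norm_sub zero_le_one, LinearIsometryEquiv.norm_map]
  refine ⟨fun h ↦ ?_, fun h ↦ ?_⟩
  · rw [hint, integral_mul_log_max_of_le_one (norm_nonneg _) h]
    field_simp
    ring
  · rw [hint, integral_mul_log_max_of_one_le h.le]
    field_simp
end
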